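/- There exists a continuous critical sub-solution u : X → ℝ such that every bi-infinite sequence calibrated for u is calibrated for every critical sub-solution; in particular Â_u = Â and A_u = A, and consequently the projected Aubry set A equals the image of Â under projection onto the first coordinate. -/

import Mathlib

open Metric Set Filter Topology

/-- `X` is a `B`-length space at scale `K`. -/
def IsBLengthSpaceAtScale (X : Type*) [MetricSpace X] (B K : ℝ) : Prop :=
  ∀ x y : X, ∃ (n : ℕ) (p : ℕ → X), p 0 = x ∧ p n = y ∧
    (∀ i < n, dist (p i) (p (i + 1)) ≤ K) ∧
    ∑ i ∈ Finset.range n, dist (p i) (p (i + 1)) ≤ B * dist x y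

/-- Uniform superlinearity of the cost `c`. -/
def UniformlySuperlinear {X : Type*} [MetricSpace X] (c : X → X → ℝ) : Prop :=
  ∀ k : ℝ, 0 ≤ k → ∃ C : ℝ, ∀ x y : X, k * dist x y - C ≤ c x y

/-- Uniform boundedness of the cost `c`. -/
def UniformlyBounded {X : Type*} [MetricSpace X] (c : X → X → ℝ) : Prop :=
  ∀ R : ℝ, ∃ A : ℝ, ∀ x y : X, dist x y ≤ R → c x y ≤ A

/-- `u` is `α`-dominated: `u y - u x ≤ c x y + α` for all `x y`. -/
def Dominated {X : Type*} (c : X → X → ℝ) (α : ℝ) (u : X → ℝ) : Prop :=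
  ∀ x y : X, u y - u x ≤ c x y + α

/-- Negative Lax-Oleinik semigroup. -/
noncomputable def Tm {X : Type*} (c : X → X → ℝ) (u : X → ℝ) (x : X) : ℝ :=
  ⨅ y, (u y + c y x)

/-- Positive Lax-Oleinik semigroup. -/
noncomputable def Tp {X : Type*} (c : X → X → ℝ) (u : X → ℝ) (x : X) : ℝ :=
  ⨆ y, (u y - c x y)

/-- The critical constant `α[0]`: the smallest `α` for which `α`-dominated functions exist. -/
noncomputable def critValue {X : Type*} (c : X → X → ℝ) : ℝ :=
  sInf {α : ℝ | ∃ u : X → ℝ, Dominated c α u}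

/-- The Mañé potential `φ(x,y) = sup_u (u y - u x)`, sup over critical sub-solutions. -/
noncomputable def mane {X : Type*} (c : X → X → ℝ) (x y : X) : ℝ :=
  sSup {r : ℝ | ∃ u : X → ℝ, Dominated c (critValue c) u ∧ r = u y - u x}

/-- A bi-infinite sequence is `(u,c,α)`-calibrated if all its finite subchains of
consecutive terms are calibrated. -/
def IsCalibrated {X : Type*} (c : X → X → ℝ) (α : ℝ) (u : X → ℝ) (x : ℤ → X) : Prop :=
  ∀ (m : ℤ) (k : ℕ), u (x (m + k)) =
    u (x m) + (∑ i ∈ Finset.range k, c (x (m + i)) (x (m + i + 1))) + k * α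

/-- The projected Aubry set of a critical sub-solution `u`. -/
def projAubry {X : Type*} (c : X → X → ℝ) (u : X → ℝ) : Set X :=
  {p : X | ∃ x : ℤ → X, IsCalibrated c (critValue c) u x ∧ x 0 = p}

/-- The set `Â_u` of pairs of consecutive terms of calibrated bi-infinite sequences. -/
def aubryPairs {X : Type*} (c : X → X → ℝ) (u : X → ℝ) : Set (X × X) :=
  {q : X × X | ∃ (x : ℤ → X) (n : ℤ),
    IsCalibrated c (critValue c) u x ∧ x n = q.1 ∧ x (n + 1) = q.2}

/-- The projected Aubry set `A = ∩_u A_u`, intersection over all critical sub-solutions. -/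
def projAubrySet {X : Type*} (c : X → X → ℝ) : Set X :=
  {p : X | ∀ u : X → ℝ, Dominated c (critValue c) u → p ∈ projAubry c u}

/-- The Aubry pair set `Â = ∩_u Â_u`, intersection over all critical sub-solutions. -/
def aubryPairsSet {X : Type*} (c : X → X → ℝ) : Set (X × X) :=
  {q : X × X | ∀ u : X → ℝ, Dominated c (critValue c) u → q ∈ aubryPairs c u}

/-- `c_n(x,y)`: infimum of total cost over chains of length `n` from `x` to `y`. -/
noncomputable def cChain {X : Type*} (c : X → X → ℝ) (n : ℕ) (x y : X) : ℝ :=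
  sInf {r : ℝ | ∃ p : ℕ → X, p 0 = x ∧ p n = y ∧
    r = ∑ i ∈ Finset.range n, c (p i) (p (i + 1))}

/-- `φ_n(x,y) = inf_{k ≥ n} (c_k(x,y) + k·α)`. -/
noncomputable def phiN {X : Type*} (c : X → X → ℝ) (α : ℝ) (n : ℕ) (x y : X) : ℝ :=
  sInf {r : ℝ | ∃ k : ℕ, n ≤ k ∧ r = cChain c k x y + k * α}

/-- The Peierls barrier, with values in the extended reals. -/
noncomputable def peierls {X : Type*} (c : X → X → ℝ) (α : ℝ) (x y : X) : EReal :=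
  Filter.liminf (fun n : ℕ => ((cChain c n x y + n * α : ℝ) : EReal)) Filter.atTop

/-- Negative Lax-Oleinik semigroup on extended-real-valued functions. -/
noncomputable def eTm {X : Type*} (c : X → X → ℝ) (u : X → EReal) (x : X) : EReal :=
  ⨅ y, (u y + (c y x : EReal))

/-- Positive Lax-Oleinik semigroup on extended-real-valued functions. -/
noncomputable def eTp {X : Type*} (c : X → X → ℝ) (u : X → EReal) (x : X) : EReal :=
  ⨆ y, (u y - (c x y : EReal))

/-!
Critical sub-solutions exist: normalised `(α[0] + 1/(n+1))`-dominated functions are uniformly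
coarsely Lipschitz, by the length-space property, and have a pointwise limit along an ultrafilter.
For a critical sub-solution `v`, superlinearity of `c` makes the infimum defining `Tm c v` local,
so `Tm c v` is continuous. Call `(a, b)` tight for `f` when `f b - f a = c a b + α[0]`. The sets of
pairs that are not tight for `Tm c v` are open in the second countable space `X × X`, so countably
many critical sub-solutions `vₙ` already account for their union. The convex combination
`w = ∑ 2⁻ⁿ⁻¹ (Tm c vₙ - Tm c vₙ x₀)` is a critical sub-solution whose tight pairs are tight for every
`Tm c vₙ`, hence for every `Tm c v`. Then `u = Tm c w` works: a sequence calibrated for `u` is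
calibrated for `w`, so its consecutive pairs are tight for every `Tm c v`, and a sequence
calibrated for `Tm c v` is calibrated for `v`.
-/

section

variable {X : Type*} {c : X → X → ℝ} {α β γ : ℝ} {u v : X → ℝ}

namespace Dominated

theorem mono (hv : Dominated c α v) (h : α ≤ β) : Dominated c β v :=
  fun x y => (hv x y).trans (by linarith)

theorem sub_const (hv : Dominated c α v) (r : ℝ) : Dominated c α fun x => v x - r :=
  fun x y => by linarith [hv x y]

theorem bddBelow_Tm (hv : Dominated c α v) (x : X) : BddBelow (range fun z => v z + c z x) :=
  ⟨v x - α, by rintro _ ⟨z, rfl⟩; linarith [hv z x]⟩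

theorem Tm_le (hv : Dominated c α v) (x z : X) : Tm c v x ≤ v z + c z x :=
  ciInf_le (hv.bddBelow_Tm x) z

theorem sub_le_Tm (hv : Dominated c α v) (x : X) : v x - α ≤ Tm c v x :=
  have : Nonempty X := ⟨x⟩
  le_ciInf fun z => by linarith [hv z x]

theorem dominated_Tm (hv : Dominated c α v) : Dominated c α (Tm c v) :=
  fun x y => by linarith [hv.Tm_le y x, hv.sub_le_Tm x]

theorem eq_of_Tm_tight (hv : Dominated c α v) {a b : X}
    (h : Tm c v b - Tm c v a = c a b + α) :
    Tm c v a = v a - α ∧ Tm c v b = v a + c a b := by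
  have h₁ := hv.Tm_le b a
  have h₂ := hv.sub_le_Tm a
  constructor <;> linarith

end Dominated

theorem isCalibrated_iff {x : ℤ → X} :
    IsCalibrated c α u x ↔ ∀ m : ℤ, u (x (m + 1)) - u (x m) = c (x m) (x (m + 1)) + α := by
  refine ⟨fun h m => by linarith [by simpa using h m 1], fun h m k => ?_⟩
  induction k with
  | zero => simp
  | succ k ih =>
    have hk := h (m + k)
    rw [Finset.sum_range_succ]
    push_cast
    rw [← add_assoc]
    linarith

theorem IsCalibrated.shift {x : ℤ → X} (h : IsCalibrated c α u x) (n : ℤ) :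
    IsCalibrated c α u fun i => x (n + i) :=
  fun m k => by simpa [add_assoc] using h (n + m) k

/-- Along a sequence calibrated for `Tm c v` the infima are attained at the preceding point. -/
theorem Dominated.isCalibrated_of_isCalibrated_Tm (hv : Dominated c α v) {x : ℤ → X}
    (h : IsCalibrated c α (Tm c v) x) : IsCalibrated c α v x := by
  rw [isCalibrated_iff] at h ⊢
  intro m
  have h₁ := (hv.eq_of_Tm_tight (h m)).2
  have h₂ := (hv.eq_of_Tm_tight (h (m + 1))).1
  linarith

section ConvexCombination

variable {ω : ℕ → ℝ} {f : ℕ → X → ℝ}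

theorem Dominated.tsum (hω : HasSum ω 1) (hω₀ : ∀ n, 0 ≤ ω n) (hf : ∀ n, Dominated c α (f n))
    (hs : ∀ x, Summable fun n => ω n * f n x) : Dominated c α fun x => ∑' n, ω n * f n x := by
  intro a b
  rw [← (hs b).tsum_sub (hs a)]
  calc ∑' n, (ω n * f n b - ω n * f n a) ≤ ∑' n, ω n * (c a b + α) :=
        ((hs b).sub (hs a)).tsum_le_tsum
          (fun n => by rw [← mul_sub]; exact mul_le_mul_of_nonneg_left (hf n a b) (hω₀ n))
          (hω.summable.mul_right _)
    _ = c a b + α := by rw [tsum_mul_right, hω.tsum_eq, one_mul]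

theorem tight_of_tsum_tight (hω : HasSum ω 1) (hω₀ : ∀ n, 0 < ω n)
    (hf : ∀ n, Dominated c α (f n)) (hs : ∀ x, Summable fun n => ω n * f n x) {a b : X}
    (hab : ∑' n, ω n * f n b - ∑' n, ω n * f n a = c a b + α) (n : ℕ) :
    f n b - f n a = c a b + α := by
  have hsum : HasSum (fun n => ω n * (c a b + α - (f n b - f n a))) 0 := by
    have := (hω.mul_right (c a b + α)).sub ((hs b).hasSum.sub (hs a).hasSum)
    rw [one_mul, hab, sub_self] at this
    simpa only [mul_sub] using this
  have hzero := congrFun ((hasSum_zero_iff_of_nonneg fun n =>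
    mul_nonneg (hω₀ n).le (sub_nonneg.2 (hf n a b))).1 hsum) n
  simp only [Pi.zero_apply, mul_eq_zero, (hω₀ n).ne', false_or] at hzero
  linarith

end ConvexCombination

theorem exists_dominated_of_tendsto {β : ℕ → ℝ} (hβ : Tendsto β atTop (𝓝 α))
    {U : ℕ → X → ℝ} (hU : ∀ n, Dominated c (β n) (U n)) (x₀ : X)
    (hbd : ∀ x, ∃ R, ∀ n, |U n x - U n x₀| ≤ R) : ∃ v, Dominated c α v := by
  choose R hR using hbd
  let F := Ultrafilter.of (atTop : Filter ℕ)
  obtain ⟨v, -, hv⟩ := (isCompact_univ_pi fun x => isCompact_Icc (a := -R x) (b := R x))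
    |>.ultrafilter_le_nhds' (F.map fun n x => U n x - U n x₀)
      (Ultrafilter.mem_map.2 <| Filter.univ_mem' fun n => mem_univ_pi.2 fun x => abs_le.1 (hR x n))
  have hlim : ∀ x, Tendsto (fun n => U n x - U n x₀) F (𝓝 (v x)) :=
    tendsto_pi_nhds.1 (Ultrafilter.coe_map _ _ ▸ hv)
  refine ⟨v, fun x y => ?_⟩
  have := le_of_tendsto_of_tendsto' (hlim y)
    (((hlim x).const_add (c x y)).add (hβ.mono_left (Ultrafilter.of_le _)))
    fun n => by linarith [hU n x y]
  linarith

theorem projAubry_eq_image_fst_aubryPairs (u : X → ℝ) :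
    projAubry c u = Prod.fst '' aubryPairs c u := by
  ext p
  constructor
  · rintro ⟨x, hx, rfl⟩
    exact ⟨(x 0, x 1), ⟨x, 0, hx, rfl, by simp⟩, rfl⟩
  · rintro ⟨q, ⟨x, n, hx, hn, -⟩, rfl⟩
    exact ⟨fun i => x (n + i), hx.shift n, by simpa using hn⟩

theorem aubryPairs_eq_aubryPairsSet (hu : Dominated c (critValue c) u)
    (hmin : ∀ x, IsCalibrated c (critValue c) u x →
      ∀ v, Dominated c (critValue c) v → IsCalibrated c (critValue c) v x) :
    aubryPairs c u = aubryPairsSet c :=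
  Subset.antisymm (fun _ ⟨x, n, hx, hn⟩ v hv => ⟨x, n, hmin x hx v hv, hn⟩) fun _ hq => hq u hu

theorem projAubry_eq_projAubrySet (hu : Dominated c (critValue c) u)
    (hmin : ∀ x, IsCalibrated c (critValue c) u x →
      ∀ v, Dominated c (critValue c) v → IsCalibrated c (critValue c) v x) :
    projAubry c u = projAubrySet c :=
  Subset.antisymm (fun _ ⟨x, hx, h₀⟩ v hv => ⟨x, hmin x hx v hv, h₀⟩) fun _ hp => hp u hu

theorem exists_seq_iUnion_eq_iUnion_of_isOpen {Y ι : Type*} [TopologicalSpace Y]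
    [SecondCountableTopology Y] [Nonempty ι] (s : ι → Set Y) (hs : ∀ i, IsOpen (s i)) :
    ∃ f : ℕ → ι, ⋃ n, s (f n) = ⋃ i, s i := by
  obtain ⟨T, hTc, hT⟩ := TopologicalSpace.isOpen_iUnion_countable s hs
  obtain ⟨f, hf⟩ := (hTc.insert (Classical.arbitrary ι)).exists_eq_range (insert_nonempty _ _)
  refine ⟨f, (iUnion_subset fun n => subset_iUnion s (f n)).antisymm ?_⟩
  rw [← hT]
  refine iUnion₂_subset fun i hi => ?_
  obtain ⟨n, rfl⟩ : i ∈ range f := hf ▸ mem_insert_of_mem _ hi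
  exact subset_iUnion (fun n => s (f n)) n

section Metric

variable [MetricSpace X]

/-- The chain is cut into pieces of length about `K`; `r` is the length of the piece in progress,
which started at `a`. -/
theorem sub_le_of_chain {K E : ℝ} (hE : 0 ≤ E) (hstep : ∀ a b, dist a b ≤ K → u b - u a ≤ E) :
    ∀ (n : ℕ) (p : ℕ → X) (a : X) (r : ℝ), (∀ i < n, dist (p i) (p (i + 1)) ≤ K) →
      dist a (p 0) ≤ r → r ≤ K →
      K * (u (p n) - u a) ≤ E * (K + 2 * (∑ i ∈ Finset.range n, dist (p i) (p (i + 1)) + r)) := by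
  intro n
  induction n with
  | zero =>
    intro p a r _ har hrK
    have hr : 0 ≤ r := dist_nonneg.trans har
    have := hstep a (p 0) (har.trans hrK)
    simp only [Finset.range_zero, Finset.sum_empty, zero_add]
    nlinarith
  | succ n ih =>
    intro p a r hp har hrK
    have hp' : ∀ i < n, dist (p (i + 1)) (p (i + 1 + 1)) ≤ K := fun i hi => hp (i + 1) (by omega)
    have hd := hp 0 (by omega)
    rw [Finset.sum_range_succ']
    rcases le_or_gt (r + dist (p 0) (p 1)) K with hsmall | hbig
    · have har' : dist a (p 1) ≤ r + dist (p 0) (p 1) := (dist_triangle _ _ _).trans (by linarith)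
      have := ih (fun i => p (i + 1)) a _ hp' har' hsmall
      linarith
    · have := ih (fun i => p (i + 1)) (p 1) 0 hp' (by simp) (dist_nonneg.trans hd)
      have h₁ := hstep a (p 0) (har.trans hrK)
      have h₂ := hstep (p 0) (p 1) hd
      nlinarith

theorem IsBLengthSpaceAtScale.sub_le_of_local_bound {B K E : ℝ}
    (hlen : IsBLengthSpaceAtScale X B K) (hK : 0 < K)
    (hstep : ∀ a b, dist a b ≤ K → u b - u a ≤ E) (x y : X) :
    u y - u x ≤ E + 2 * B * E / K * dist x y := by
  obtain ⟨n, p, rfl, rfl, hpK, hpB⟩ := hlen x y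
  have hE : 0 ≤ E := by simpa using hstep (p 0) (p 0) (by simpa using hK.le)
  have h := sub_le_of_chain hE hstep n p (p 0) 0 hpK (by simp) hK.le
  refine le_of_mul_le_mul_left ?_ hK
  rw [mul_add, ← mul_assoc, mul_div_cancel₀ _ hK.ne']
  nlinarith

theorem Dominated.sub_le_of_lengthSpace {B K A : ℝ} (hv : Dominated c β v)
    (hlen : IsBLengthSpaceAtScale X B K) (hK : 0 < K) (hA : ∀ a b, dist a b ≤ K → c a b ≤ A)
    (hβ : β ≤ γ) (x y : X) :
    v y - v x ≤ (A + γ) + 2 * B * (A + γ) / K * dist x y :=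
  hlen.sub_le_of_local_bound hK (fun a b hab => by linarith [hv a b, hA a b hab]) x y

theorem Dominated.abs_sub_le_of_lengthSpace {B K A : ℝ} (hv : Dominated c β v)
    (hlen : IsBLengthSpaceAtScale X B K) (hK : 0 < K) (hA : ∀ a b, dist a b ≤ K → c a b ≤ A)
    (hβ : β ≤ γ) (x y : X) :
    |v y - v x| ≤ (A + γ) + 2 * B * (A + γ) / K * dist x y :=
  abs_sub_le_iff.2 ⟨hv.sub_le_of_lengthSpace hlen hK hA hβ x y,
    dist_comm x y ▸ hv.sub_le_of_lengthSpace hlen hK hA hβ y x⟩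

theorem exists_dominated_critValue [Nonempty X] {B K A : ℝ} (hK : 0 < K)
    (hlen : IsBLengthSpaceAtScale X B K) (hsl : UniformlySuperlinear c)
    (hA : ∀ a b, dist a b ≤ K → c a b ≤ A) : ∃ v, Dominated c (critValue c) v := by
  obtain ⟨C, hC⟩ := hsl 0 le_rfl
  have hS : {β | ∃ u : X → ℝ, Dominated c β u}.Nonempty :=
    ⟨C, fun _ => 0, fun x y => by simp only [sub_self]; linarith [hC x y]⟩
  have hU : ∀ n : ℕ, ∃ U, Dominated c (critValue c + 1 / (n + 1)) U := fun n => by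
    obtain ⟨β, ⟨U, hU⟩, hβ⟩ := exists_lt_of_csInf_lt hS
      (lt_add_of_pos_right (critValue c) Nat.one_div_pos_of_nat)
    exact ⟨U, hU.mono hβ.le⟩
  choose U hU using hU
  have hβ : Tendsto (fun n : ℕ => critValue c + 1 / (n + 1)) atTop (𝓝 (critValue c)) := by
    simpa using (tendsto_one_div_add_atTop_nhds_zero_nat (𝕜 := ℝ)).const_add (critValue c)
  have hle : ∀ n : ℕ, critValue c + 1 / (n + 1) ≤ critValue c + 1 := fun n => by
    gcongr
    exact div_le_one_of_le₀ (by linarith [n.cast_nonneg (α := ℝ)]) (by positivity)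
  obtain ⟨x₀⟩ := ‹Nonempty X›
  exact exists_dominated_of_tendsto hβ hU x₀ fun x =>
    ⟨_, fun n => (hU n).abs_sub_le_of_lengthSpace hlen hK hA (hle n) x₀ x⟩

theorem Dominated.Tm_le_of_far (hv : Dominated c α v) {M L C : ℝ}
    (hML : ∀ x y, v y - v x ≤ M + L * dist x y)
    (hC : ∀ x y, (|L| + 1) * dist x y - C ≤ c x y) {x₀ x z : X} (hx : dist x x₀ ≤ 1)
    (hz : M + |L| + 1 + C + c x₀ x₀ < dist z x₀) :
    Tm c v x₀ ≤ v z + c z x := by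
  have h₁ := hv.Tm_le x₀ x₀
  have h₂ := hML z x₀
  have h₃ := hC z x
  have h₄ : L * dist z x₀ ≤ |L| * dist z x₀ := by gcongr; exact le_abs_self L
  have h₅ : (|L| + 1) * (dist z x₀ - 1) ≤ (|L| + 1) * dist z x := by
    gcongr
    linarith [dist_triangle z x x₀, dist_comm x x₀]
  nlinarith

theorem Dominated.continuous_Tm [ProperSpace X] (hcont : Continuous fun q : X × X => c q.1 q.2)
    (hsl : UniformlySuperlinear c) (hv : Dominated c α v) {M L : ℝ}
    (hML : ∀ x y, v y - v x ≤ M + L * dist x y) : Continuous (Tm c v) := by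
  obtain ⟨C, hC⟩ := hsl (|L| + 1) (by positivity)
  refine continuous_iff_continuousAt.2 fun x₀ => ?_
  have : Nonempty X := ⟨x₀⟩
  refine tendsto_order.2 ⟨fun a ha => ?_, fun b hb => ?_⟩
  · obtain ⟨ε, hε, hεa⟩ : ∃ ε > 0, a < Tm c v x₀ - ε :=
      ⟨(Tm c v x₀ - a) / 2, by linarith, by linarith⟩
    have hnear : ∀ᶠ x in 𝓝 x₀, ∀ z ∈ closedBall x₀ (M + |L| + 1 + C + c x₀ x₀),
        c z x₀ - ε < c z x := by
      refine (isCompact_closedBall _ _).eventually_forall_of_forall_eventually fun z _ => ?_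
      have hg : Continuous fun q : X × X => c q.2 q.1 - c q.2 x₀ :=
        (hcont.comp (continuous_snd.prodMk continuous_fst)).sub
          (hcont.comp (continuous_snd.prodMk continuous_const))
      filter_upwards [hg.continuousAt.eventually (lt_mem_nhds (show -ε < _ by simpa using hε))]
        with q hq
      linarith
    filter_upwards [hnear, closedBall_mem_nhds x₀ one_pos] with x hx hx₁
    have : Tm c v x₀ - ε ≤ Tm c v x := by
      refine le_ciInf fun z => ?_
      by_cases hz : z ∈ closedBall x₀ (M + |L| + 1 + C + c x₀ x₀)
      · linarith [hx z hz, hv.Tm_le x₀ z]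
      · linarith [hv.Tm_le_of_far hML hC hx₁ (not_le.1 hz)]
    linarith
  · obtain ⟨z, hz⟩ := exists_lt_of_ciInf_lt hb
    have hcz : Continuous fun x => v z + c z x :=
      continuous_const.add (hcont.comp (continuous_const.prodMk continuous_id))
    filter_upwards [hcz.continuousAt.eventually (gt_mem_nhds hz)] with x hx
    exact (hv.Tm_le x z).trans_lt hx

theorem exists_dominated_forall_Tm_tight [SecondCountableTopology X]
    (hcont : Continuous fun q : X × X => c q.1 q.2) {M L : ℝ} (x₀ : X)
    (hne : ∃ v, Dominated c α v)
    (hML : ∀ v, Dominated c α v → ∀ x y, |v y - v x| ≤ M + L * dist x y)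
    (hTm : ∀ v, Dominated c α v → Continuous (Tm c v)) :
    ∃ w, Dominated c α w ∧ ∀ a b, w b - w a = c a b + α →
      ∀ v, Dominated c α v → Tm c v b - Tm c v a = c a b + α := by
  have : Nonempty {v // Dominated c α v} := hne.elim fun v hv => ⟨⟨v, hv⟩⟩
  obtain ⟨f, hf⟩ := exists_seq_iUnion_eq_iUnion_of_isOpen
    (fun v : {v // Dominated c α v} => {q : X × X | Tm c v q.2 - Tm c v q.1 < c q.1 q.2 + α})
    fun v => isOpen_lt (((hTm v v.2).comp continuous_snd).sub ((hTm v v.2).comp continuous_fst))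
      (hcont.add continuous_const)
  set G : ℕ → X → ℝ := fun n x => Tm c (f n) x - Tm c (f n) x₀
  have hG : ∀ n, Dominated c α (G n) := fun n => (f n).2.dominated_Tm.sub_const _
  have hω := hasSum_geometric_two' 1
  have hω₀ : ∀ n : ℕ, (0 : ℝ) < 1 / 2 / 2 ^ n := fun n => by positivity
  have hGs : ∀ x, Summable fun n => 1 / 2 / 2 ^ n * G n x := fun x =>
    .of_norm_bounded (hω.summable.mul_right (M + L * dist x₀ x)) fun n => by
      rw [norm_mul, Real.norm_of_nonneg (hω₀ n).le]
      exact mul_le_mul_of_nonneg_left (hML _ (f n).2.dominated_Tm x₀ x) (hω₀ n).le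
  refine ⟨_, Dominated.tsum hω (fun n => (hω₀ n).le) hG hGs, fun a b hab v hv => ?_⟩
  have hfn : ∀ n, Tm c (f n) b - Tm c (f n) a = c a b + α := fun n => by
    have := tight_of_tsum_tight hω hω₀ hG hGs hab n
    simp only [G] at this
    linarith
  by_contra hne
  have hmem : (a, b) ∈ ⋃ n, {q : X × X | Tm c (f n) q.2 - Tm c (f n) q.1 < c q.1 q.2 + α} :=
    hf ▸ mem_iUnion.2 ⟨⟨v, hv⟩, lt_of_le_of_ne (hv.dominated_Tm a b) hne⟩
  obtain ⟨n, hn⟩ := mem_iUnion.1 hmem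
  exact hn.ne (hfn n)

end Metric

end

theorem exists_subsolution_with_minimal_aubry_set_general {X : Type*} [MetricSpace X] [Nonempty X] [ProperSpace X]
    {B K : ℝ} (hK : 0 < K) (hlen : IsBLengthSpaceAtScale X B K)
    {c : X → X → ℝ} (hcont : Continuous fun q : X × X => c q.1 q.2)
    (hsl : UniformlySuperlinear c) (hub : UniformlyBounded c) :
    ∃ u : X → ℝ, Continuous u ∧ Dominated c (critValue c) u ∧
      (∀ x : ℤ → X, IsCalibrated c (critValue c) u x →
        ∀ v : X → ℝ, Dominated c (critValue c) v → IsCalibrated c (critValue c) v x) ∧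
      aubryPairs c u = aubryPairsSet c ∧
      projAubry c u = projAubrySet c ∧
      projAubrySet c = Prod.fst '' aubryPairsSet c := by
  obtain ⟨A, hA⟩ := hub K
  obtain ⟨v₀, hv₀⟩ := exists_dominated_critValue hK hlen hsl hA
  have hML := fun v (hv : Dominated c (critValue c) v) =>
    hv.abs_sub_le_of_lengthSpace hlen hK hA le_rfl
  have hTm : ∀ v, Dominated c (critValue c) v → Continuous (Tm c v) := fun v hv =>
    hv.continuous_Tm hcont hsl fun x y => (le_abs_self _).trans (hML v hv x y)
  obtain ⟨w, hw, hwtight⟩ :=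
    exists_dominated_forall_Tm_tight hcont (Classical.arbitrary X) ⟨v₀, hv₀⟩ hML hTm
  have hmin : ∀ x, IsCalibrated c (critValue c) (Tm c w) x →
      ∀ v, Dominated c (critValue c) v → IsCalibrated c (critValue c) v x := fun x hx v hv =>
    hv.isCalibrated_of_isCalibrated_Tm <| isCalibrated_iff.2 fun m =>
      hwtight _ _ (isCalibrated_iff.1 (hw.isCalibrated_of_isCalibrated_Tm hx) m) v hv
  have hu := hw.dominated_Tm
  refine ⟨Tm c w, hTm w hw, hu, hmin, aubryPairs_eq_aubryPairsSet hu hmin,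
    projAubry_eq_projAubrySet hu hmin, ?_⟩
  rw [← projAubry_eq_projAubrySet hu hmin, projAubry_eq_image_fst_aubryPairs,
    aubryPairs_eq_aubryPairsSet hu hmin]

theorem exists_subsolution_with_minimal_aubry_set {X : Type*} [MetricSpace X] [Nonempty X] [ProperSpace X]
    {B K : ℝ} (hB : 1 ≤ B) (hK : 0 < K) (hlen : IsBLengthSpaceAtScale X B K)
    {c : X → X → ℝ} (hcont : Continuous fun q : X × X => c q.1 q.2)
    (hsl : UniformlySuperlinear c) (hub : UniformlyBounded c) :
    ∃ u : X → ℝ, Continuous u ∧ Dominated c (critValue c) u ∧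
      (∀ x : ℤ → X, IsCalibrated c (critValue c) u x →
        ∀ v : X → ℝ, Dominated c (critValue c) v → IsCalibrated c (critValue c) v x) ∧
      aubryPairs c u = aubryPairsSet c ∧
      projAubry c u = projAubrySet c ∧
      projAubrySet c = Prod.fst '' aubryPairsSet c :=
  exists_subsolution_with_minimal_aubry_set_general hK hlen hcont hsl hub
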